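/- Let X be a real normed space, Y a real Banach space, and ψ : X × X → [0, ∞) a function such that the series ∑_{i=0}^∞ ψ(0, 2^i x)/2^i converges for all x in X and lim_{n→∞} ψ(2^n x, 2^n y)/2^n = 0 for all x, y in X. If f : X → Y is an odd function satisfying ‖D_f(x,y)‖ ≤ ψ(x,y) for all x, y in X, then there exists a unique additive function A : X → Y such that ‖f(x) - A(x)‖ ≤ (1/2) ∑_{i=0}^∞ ψ(0, 2^i x)/2^i for all x in X; moreover A(x) = lim_{n→∞} f(2^n x)/2^n. -/

import Mathlib

/-!
Hyers' direct method. For odd `f`, `D_f(0, y) = 3 (f(2y) - 2 f(y))`, so consecutive terms of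
`2⁻ⁿ f(2ⁿ x)` differ by at most `ψ(0, 2ⁿ x) / 2ⁿ⁺¹`; the sequence is Cauchy and its limit `A` lies
within `½ ∑ ψ(0, 2ⁱ x) / 2ⁱ` of `f`. Rescaling `D_f` and using `ψ(2ⁿ x, 2ⁿ y) / 2ⁿ → 0` gives
`D_A = 0`. For odd `A` this forces `A(2y) = 2 A(y)`, then Jensen's equation
`A(x + y) + A(x - y) = 2 A(x)`, hence additivity. Conversely, any additive `A'` at that distance
from `f` is the limit of `2⁻ⁿ f(2ⁿ x)`, because the tails of the series tend to zero.
-/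

open Filter Topology

/-- The quartic functional equation:
`Q(2x+y) + Q(2x-y) = 4(Q(x+y) + Q(x-y)) + 24 Q(x) - 6 Q(y)`. -/
def IsQuartic {X Y : Type*} [AddCommGroup X] [Module ℝ X] [AddCommGroup Y] [Module ℝ Y]
    (f : X → Y) : Prop :=
  ∀ x y : X,
    f ((2 : ℝ) • x + y) + f ((2 : ℝ) • x - y) =
      (4 : ℝ) • (f (x + y) + f (x - y)) + (24 : ℝ) • f x - (6 : ℝ) • f y

/-- The difference operator
`D_f(x,y) = 7[f(2x+y) + f(2x-y)] - 28[f(x+y) + f(x-y)] + 3[f(2y) - 2f(y)] - 14[f(2x) - 4f(x)]`. -/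
def Dmap {X Y : Type*} [AddCommGroup X] [Module ℝ X] [AddCommGroup Y] [Module ℝ Y]
    (f : X → Y) (x y : X) : Y :=
  (7 : ℝ) • (f ((2 : ℝ) • x + y) + f ((2 : ℝ) • x - y))
    - (28 : ℝ) • (f (x + y) + f (x - y))
    + (3 : ℝ) • (f ((2 : ℝ) • y) - (2 : ℝ) • f y)
    - (14 : ℝ) • (f ((2 : ℝ) • x) - (4 : ℝ) • f x)

section Algebra

variable {X Y : Type*} [AddCommGroup X] [AddCommGroup Y] [Module ℝ Y] {f : X → Y}

lemma map_zero_of_odd (hodd : ∀ x, f (-x) = -f x) : f 0 = 0 := by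
  have h := hodd 0
  rw [neg_zero] at h
  linear_combination (norm := module) (1 / 2 : ℝ) • h

variable [Module ℝ X]

lemma Dmap_zero_left_of_odd (hodd : ∀ x, f (-x) = -f x) (y : X) :
    Dmap f 0 y = (3 : ℝ) • (f ((2 : ℝ) • y) - (2 : ℝ) • f y) := by
  rw [Dmap, smul_zero, zero_add, zero_sub, hodd y, map_zero_of_odd hodd]
  module

lemma map_two_smul_of_Dmap_eq_zero (hodd : ∀ x, f (-x) = -f x) (hD : ∀ x y, Dmap f x y = 0)
    (y : X) : f ((2 : ℝ) • y) = (2 : ℝ) • f y := by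
  have h := Dmap_zero_left_of_odd hodd y
  rw [hD] at h
  linear_combination (norm := module) (-1 / 3 : ℝ) • h

lemma jensen_of_Dmap_eq_zero (hodd : ∀ x, f (-x) = -f x) (hD : ∀ x y, Dmap f x y = 0)
    (x y : X) : f (x + y) + f (x - y) = (2 : ℝ) • f x := by
  have hf2 := map_two_smul_of_Dmap_eq_zero hodd hD
  have reduced : ∀ x y, f ((2 : ℝ) • x + y) + f ((2 : ℝ) • x - y)
      = (4 : ℝ) • (f (x + y) + f (x - y)) - (4 : ℝ) • f x := by
    intro x y
    have h := hD x y
    rw [Dmap, hf2 x, hf2 y] at h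
    linear_combination (norm := module) (1 / 7 : ℝ) • h
  have h1 := reduced x ((2 : ℝ) • x + y)
  rw [show (2 : ℝ) • x + ((2 : ℝ) • x + y) = (4 : ℝ) • x + y by module,
      show (2 : ℝ) • x - ((2 : ℝ) • x + y) = -y by module,
      show x + ((2 : ℝ) • x + y) = (3 : ℝ) • x + y by module,
      show x - ((2 : ℝ) • x + y) = -(x + y) by module, hodd y, hodd (x + y)] at h1
  have h2 := reduced x ((2 : ℝ) • x - y)
  rw [show (2 : ℝ) • x + ((2 : ℝ) • x - y) = (4 : ℝ) • x - y by module,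
      show (2 : ℝ) • x - ((2 : ℝ) • x - y) = y by module,
      show x + ((2 : ℝ) • x - y) = (3 : ℝ) • x - y by module,
      show x - ((2 : ℝ) • x - y) = -(x - y) by module, hodd (x - y)] at h2
  have h3 := reduced ((2 : ℝ) • x) y
  rw [show (2 : ℝ) • (2 : ℝ) • x + y = (4 : ℝ) • x + y by module,
      show (2 : ℝ) • (2 : ℝ) • x - y = (4 : ℝ) • x - y by module, hf2 x] at h3
  have h4 := reduced x (x + y)
  rw [show (2 : ℝ) • x + (x + y) = (3 : ℝ) • x + y by module,
      show (2 : ℝ) • x - (x + y) = x - y by module,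
      show x + (x + y) = (2 : ℝ) • x + y by module,
      show x - (x + y) = -y by module, hodd y] at h4
  have h5 := reduced x (x - y)
  rw [show (2 : ℝ) • x + (x - y) = (3 : ℝ) • x - y by module,
      show (2 : ℝ) • x - (x - y) = x + y by module,
      show x + (x - y) = (2 : ℝ) • x - y by module,
      show x - (x - y) = y by module] at h5
  -- `h1`, `h2` and `h3` eliminate the values at `4x ± y`, then `h4`, `h5` those at `3x ± y`.
  linear_combination (norm := module) (-3 / 10 : ℝ) • reduced x y + (-1 / 40 : ℝ) • h1
    + (-1 / 40 : ℝ) • h2 + (1 / 40 : ℝ) • h3 + (-1 / 10 : ℝ) • h4 + (-1 / 10 : ℝ) • h5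

lemma additive_of_jensen (h0 : f 0 = 0) (hJ : ∀ x y, f (x + y) + f (x - y) = (2 : ℝ) • f x)
    (u v : X) : f (u + v) = f u + f v := by
  have hf2 : f (u + v) = (2 : ℝ) • f ((1 / 2 : ℝ) • (u + v)) := by
    have h := hJ ((1 / 2 : ℝ) • (u + v)) ((1 / 2 : ℝ) • (u + v))
    rwa [sub_self, h0, add_zero, ← two_smul ℝ, smul_smul, mul_one_div_cancel two_ne_zero,
      one_smul] at h
  have h := hJ ((1 / 2 : ℝ) • (u + v)) ((1 / 2 : ℝ) • (u - v))
  rw [show (1 / 2 : ℝ) • (u + v) + (1 / 2 : ℝ) • (u - v) = u by module,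
    show (1 / 2 : ℝ) • (u + v) - (1 / 2 : ℝ) • (u - v) = v by module] at h
  rw [hf2, h]

lemma map_two_pow_smul_of_additive (hf : ∀ x y, f (x + y) = f x + f y) (n : ℕ) (x : X) :
    f ((2 : ℝ) ^ n • x) = (2 : ℝ) ^ n • f x := by
  simpa [← Nat.cast_smul_eq_nsmul ℝ] using map_nsmul (AddMonoidHom.mk' f hf) (2 ^ n) x

lemma Dmap_smul_comp_smul (c a : ℝ) (x y : X) :
    Dmap (fun z => c • f (a • z)) x y = c • Dmap f (a • x) (a • y) := by
  simp only [Dmap, smul_add, smul_sub, smul_comm a (2 : ℝ)]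
  module

end Algebra

section Analysis

variable {X Y : Type*} [AddCommGroup X] [Module ℝ X]

lemma tendsto_Dmap [AddCommGroup Y] [Module ℝ Y] [TopologicalSpace Y] [IsTopologicalAddGroup Y]
    [ContinuousConstSMul ℝ Y] {ι : Type*} {l : Filter ι} {g : ι → X → Y} {A : X → Y}
    (hg : ∀ x, Tendsto (fun i => g i x) l (𝓝 (A x))) (x y : X) :
    Tendsto (fun i => Dmap (g i) x y) l (𝓝 (Dmap A x y)) :=
  ((((hg _).add (hg _)).const_smul _).sub (((hg _).add (hg _)).const_smul _)).add
    (((hg _).sub ((hg _).const_smul _)).const_smul _) |>.sub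
    (((hg _).sub ((hg _).const_smul _)).const_smul _)

variable [NormedAddCommGroup Y] [NormedSpace ℝ Y]

lemma norm_inv_two_pow_smul (n : ℕ) (v : Y) : ‖((2 : ℝ) ^ n)⁻¹ • v‖ = ‖v‖ / 2 ^ n := by
  rw [norm_smul, norm_inv, norm_pow, Real.norm_two, inv_mul_eq_div]

lemma tsum_two_pow_smul_div_two_pow (φ : X → ℝ) (n : ℕ) (x : X) :
    (∑' i : ℕ, φ ((2 : ℝ) ^ i • (2 : ℝ) ^ n • x) / 2 ^ i) / 2 ^ n
      = ∑' i : ℕ, φ ((2 : ℝ) ^ (i + n) • x) / 2 ^ (i + n) := by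
  rw [← tsum_div_const]
  congr! 2 with i
  rw [smul_smul, ← pow_add, pow_add, div_div]

lemma exists_tendsto_of_norm_map_two_smul_sub_le [CompleteSpace Y] {g : X → Y} {φ : X → ℝ}
    (hg : ∀ y, ‖g ((2 : ℝ) • y) - (2 : ℝ) • g y‖ ≤ φ y) {x : X}
    (hφ : Summable fun i : ℕ => φ ((2 : ℝ) ^ i • x) / 2 ^ i) :
    ∃ L, Tendsto (fun n : ℕ => ((2 : ℝ) ^ n)⁻¹ • g ((2 : ℝ) ^ n • x)) atTop (𝓝 L) ∧
      ‖g x - L‖ ≤ (1 / 2) * ∑' i : ℕ, φ ((2 : ℝ) ^ i • x) / 2 ^ i := by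
  set a : ℕ → Y := fun n => ((2 : ℝ) ^ n)⁻¹ • g ((2 : ℝ) ^ n • x)
  set d : ℕ → ℝ := fun n => (1 / 2) * (φ ((2 : ℝ) ^ n • x) / 2 ^ n)
  have hd : Summable d := hφ.mul_left _
  have hstep : ∀ n, dist (a n) (a (n + 1)) ≤ d n := by
    intro n
    have hdiff : a (n + 1) - a n = ((2 : ℝ) ^ (n + 1))⁻¹ •
        (g ((2 : ℝ) • (2 : ℝ) ^ n • x) - (2 : ℝ) • g ((2 : ℝ) ^ n • x)) := by
      simp only [a, smul_smul, ← pow_succ']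
      match_scalars <;> ring
    rw [dist_comm, dist_eq_norm, hdiff, norm_inv_two_pow_smul]
    calc _ ≤ φ ((2 : ℝ) ^ n • x) / 2 ^ (n + 1) := by gcongr; exact hg _
      _ = d n := by simp only [d]; ring
  obtain ⟨L, hL⟩ := cauchySeq_tendsto_of_complete (cauchySeq_of_dist_le_of_summable d hstep hd)
  refine ⟨L, hL, ?_⟩
  have hbound := dist_le_tsum_of_dist_le_of_tendsto₀ d hstep hd hL
  simpa [a, d, dist_eq_norm, tsum_mul_left] using hbound

lemma tendsto_of_additive_of_norm_sub_le {f A : X → Y} {φ : X → ℝ} {C : ℝ}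
    (hA : ∀ x y, A (x + y) = A x + A y)
    (hfA : ∀ x, ‖f x - A x‖ ≤ C * ∑' i : ℕ, φ ((2 : ℝ) ^ i • x) / 2 ^ i) (x : X) :
    Tendsto (fun n : ℕ => ((2 : ℝ) ^ n)⁻¹ • f ((2 : ℝ) ^ n • x)) atTop (𝓝 (A x)) := by
  rw [tendsto_iff_norm_sub_tendsto_zero]
  have htail := (tendsto_sum_nat_add fun i => φ ((2 : ℝ) ^ i • x) / 2 ^ i).const_mul C
  rw [mul_zero] at htail
  refine squeeze_zero (fun _ => norm_nonneg _) (fun n => ?_) htail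
  calc ‖((2 : ℝ) ^ n)⁻¹ • f ((2 : ℝ) ^ n • x) - A x‖
      = ‖f ((2 : ℝ) ^ n • x) - A ((2 : ℝ) ^ n • x)‖ / 2 ^ n := by
        rw [map_two_pow_smul_of_additive hA, ← norm_inv_two_pow_smul, smul_sub,
          inv_smul_smul₀ (by positivity)]
    _ ≤ C * (∑' i : ℕ, φ ((2 : ℝ) ^ i • (2 : ℝ) ^ n • x) / 2 ^ i) / 2 ^ n := by
        gcongr; exact hfA _
    _ = C * ∑' i : ℕ, φ ((2 : ℝ) ^ (i + n) • x) / 2 ^ (i + n) := by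
        rw [mul_div_assoc, tsum_two_pow_smul_div_two_pow]

lemma Dmap_eq_zero_of_tendsto {f A : X → Y} {ψ : X → X → ℝ}
    (hA : ∀ x, Tendsto (fun n : ℕ => ((2 : ℝ) ^ n)⁻¹ • f ((2 : ℝ) ^ n • x)) atTop (𝓝 (A x)))
    (hD : ∀ x y, ‖Dmap f x y‖ ≤ ψ x y) {x y : X}
    (hlim : Tendsto (fun n : ℕ => ψ ((2 : ℝ) ^ n • x) ((2 : ℝ) ^ n • y) / 2 ^ n) atTop (𝓝 0)) :
    Dmap A x y = 0 := by
  refine tendsto_nhds_unique (tendsto_Dmap hA x y) (squeeze_zero_norm (fun n => ?_) hlim)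
  rw [Dmap_smul_comp_smul, norm_inv_two_pow_smul]
  gcongr
  exact hD _ _

end Analysis

theorem odd_stability_general {X Y : Type*} [NormedAddCommGroup X] [NormedSpace ℝ X]
    [NormedAddCommGroup Y] [NormedSpace ℝ Y] [CompleteSpace Y]
    (ψ : X → X → ℝ)
    (hsum : ∀ x : X, Summable fun i : ℕ => ψ 0 ((2 : ℝ) ^ i • x) / 2 ^ i)
    (hlim : ∀ x y : X,
      Tendsto (fun n : ℕ => ψ ((2 : ℝ) ^ n • x) ((2 : ℝ) ^ n • y) / 2 ^ n) atTop (𝓝 0))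
    (f : X → Y) (hodd : ∀ x : X, f (-x) = -f x)
    (hD : ∀ x y : X, ‖Dmap f x y‖ ≤ ψ x y) :
    ∃ A : X → Y, (∀ x y : X, A (x + y) = A x + A y) ∧
      (∀ x : X, ‖f x - A x‖ ≤ (1 / 2) * ∑' i : ℕ, ψ 0 ((2 : ℝ) ^ i • x) / 2 ^ i) ∧
      (∀ x : X,
        Tendsto (fun n : ℕ => ((2 : ℝ) ^ n)⁻¹ • f ((2 : ℝ) ^ n • x)) atTop (𝓝 (A x))) ∧
      ∀ A' : X → Y, (∀ x y : X, A' (x + y) = A' x + A' y) →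
        (∀ x : X, ‖f x - A' x‖ ≤ (1 / 2) * ∑' i : ℕ, ψ 0 ((2 : ℝ) ^ i • x) / 2 ^ i) →
        A' = A := by
  have hf2 : ∀ y, ‖f ((2 : ℝ) • y) - (2 : ℝ) • f y‖ ≤ ψ 0 y := fun y => by
    have h := hD 0 y
    rw [Dmap_zero_left_of_odd hodd, norm_smul, Real.norm_ofNat] at h
    linarith [norm_nonneg (f ((2 : ℝ) • y) - (2 : ℝ) • f y)]
  choose A hA hfA using fun x => exists_tendsto_of_norm_map_two_smul_sub_le hf2 (hsum x)
  have hAodd : ∀ x, A (-x) = -A x := fun x =>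
    tendsto_nhds_unique (hA (-x)) (by simpa only [smul_neg, hodd] using (hA x).neg)
  have hDA : ∀ x y, Dmap A x y = 0 := fun x y => Dmap_eq_zero_of_tendsto hA hD (hlim x y)
  have hAadd := additive_of_jensen (map_zero_of_odd hAodd) (jensen_of_Dmap_eq_zero hAodd hDA)
  refine ⟨A, hAadd, hfA, hA, fun A' hA'add hfA' => funext fun x => ?_⟩
  exact tendsto_nhds_unique (tendsto_of_additive_of_norm_sub_le hA'add hfA' x) (hA x)

theorem odd_stability {X Y : Type*} [NormedAddCommGroup X] [NormedSpace ℝ X]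
    [NormedAddCommGroup Y] [NormedSpace ℝ Y] [CompleteSpace Y]
    (ψ : X → X → ℝ) (hψ : ∀ x y : X, 0 ≤ ψ x y)
    (hsum : ∀ x : X, Summable fun i : ℕ => ψ 0 ((2 : ℝ) ^ i • x) / 2 ^ i)
    (hlim : ∀ x y : X,
      Tendsto (fun n : ℕ => ψ ((2 : ℝ) ^ n • x) ((2 : ℝ) ^ n • y) / 2 ^ n) atTop (𝓝 0))
    (f : X → Y) (hodd : ∀ x : X, f (-x) = -f x)
    (hD : ∀ x y : X, ‖Dmap f x y‖ ≤ ψ x y) :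
    ∃ A : X → Y, (∀ x y : X, A (x + y) = A x + A y) ∧
      (∀ x : X, ‖f x - A x‖ ≤ (1 / 2) * ∑' i : ℕ, ψ 0 ((2 : ℝ) ^ i • x) / 2 ^ i) ∧
      (∀ x : X,
        Tendsto (fun n : ℕ => ((2 : ℝ) ^ n)⁻¹ • f ((2 : ℝ) ^ n • x)) atTop (𝓝 (A x))) ∧
      ∀ A' : X → Y, (∀ x y : X, A' (x + y) = A' x + A' y) →
        (∀ x : X, ‖f x - A' x‖ ≤ (1 / 2) * ∑' i : ℕ, ψ 0 ((2 : ℝ) ^ i • x) / 2 ^ i) →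
        A' = A :=
  odd_stability_general ψ hsum hlim f hodd hD
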